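/- For every real κ with 0 < κ ≤ 1, every real a ≥ 1/2, and every real b > 1, one has the strict inequality I_{q(a, b+1, κ)}(a, b+1) < I_{q(a, b, κ)}(a, b). -/

import Mathlib

/-- The (complete) Beta function `B(a,b) = ∫₀¹ t^(a-1) (1-t)^(b-1) dt`. -/
noncomputable def betaFun (a b : ℝ) : ℝ :=
  ∫ t in (0:ℝ)..1, t ^ (a - 1) * (1 - t) ^ (b - 1)

/-- The regularized incomplete Beta function
`I_x(a,b) = (∫₀^x t^(a-1) (1-t)^(b-1) dt) / B(a,b)`. -/
noncomputable def regIncBeta (x a b : ℝ) : ℝ :=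
  (∫ t in (0:ℝ)..x, t ^ (a - 1) * (1 - t) ^ (b - 1)) / betaFun a b

/-- `q(a,b,κ) = κa/(κa + b - 1)`. -/
noncomputable def qF (a b κ : ℝ) : ℝ := κ * a / (κ * a + b - 1)

/-!
Integration by parts gives `I_x(a, b+1) = I_x(a, b) + x^a (1-x)^b / (b B(a, b))`. Hence, with
`q' = q(a, b+1, κ) < q = q(a, b, κ)`, the claim becomes
`q'^a (1-q')^b / b < ∫_{q'}^{q} t^(a-1) (1-t)^(b-1) dt`.
The integrand is quasiconcave on `(0, 1)` (decreasing for `a ≤ 1`, log-concave for `a ≥ 1`), so the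
integral is at least `q - q'` times the smaller of its two endpoint values, and both endpoint
comparisons are explicit. Writing `s = κa ≤ a`, the comparison at `q` amounts to
`(b-1) log (b/(b-1)) < (a+b-1) log ((s+b)/(s+b-1))`, which holds because `x ↦ x log (1 + 1/x)`
is increasing.
-/

open Real Set MeasureTheory intervalIntegral

lemma QuasiconcaveOn.congr {𝕜 E β : Type*} [Semiring 𝕜] [PartialOrder 𝕜] [AddCommMonoid E]
    [SMul 𝕜 E] [LE β] {s : Set E} {f g : E → β} (hf : QuasiconcaveOn 𝕜 s f) (hfg : EqOn f g s) :
    QuasiconcaveOn 𝕜 s g := fun r => by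
  convert hf r using 1
  ext x
  exact and_congr_right fun hx => by rw [hfg hx]

lemma QuasiconcaveOn.min_le_of_mem_Icc {𝕜 β : Type*} [Field 𝕜] [LinearOrder 𝕜]
    [IsStrictOrderedRing 𝕜] [LinearOrder β] {f : 𝕜 → β} {s : Set 𝕜} (hf : QuasiconcaveOn 𝕜 s f)
    {x y t : 𝕜} (hx : x ∈ s) (hy : y ∈ s) (ht : t ∈ Icc x y) : min (f x) (f y) ≤ f t :=
  ((hf _).segment_subset ⟨hx, min_le_left _ _⟩ ⟨hy, min_le_right _ _⟩
    (segment_eq_uIcc x y ▸ Icc_subset_uIcc ht)).2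

lemma hasDerivAt_mul_log_add_one_sub_log {x : ℝ} (hx : 0 < x) :
    HasDerivAt (fun x => x * (log (x + 1) - log x)) (log (x + 1) - log x - 1 / (x + 1)) x := by
  have hlog1 := ((hasDerivAt_id x).add_const 1).log (by dsimp only [id]; positivity)
  have hd := (hasDerivAt_id x).mul (hlog1.sub (hasDerivAt_log hx.ne'))
  refine hd.congr_deriv ?_
  simp only [id, Pi.sub_apply]
  field_simp
  ring

lemma strictMonoOn_mul_log_add_one_sub_log :
    StrictMonoOn (fun x : ℝ => x * (log (x + 1) - log x)) (Ioi 0) := by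
  refine strictMonoOn_of_hasDerivWithinAt_pos (convex_Ioi 0)
    (fun x hx => (hasDerivAt_mul_log_add_one_sub_log hx).continuousAt.continuousWithinAt)
    (fun x hx => (hasDerivAt_mul_log_add_one_sub_log (interior_subset hx)).hasDerivWithinAt)
    fun x hx => ?_
  have hx : 0 < x := interior_subset hx
  have hlt := log_lt_sub_one_of_pos (by positivity : 0 < x / (x + 1)) (by
    rw [Ne, div_eq_one_iff_eq (by linarith)]; linarith)
  rw [log_div hx.ne' (by linarith)] at hlt
  have hrhs : x / (x + 1) - 1 = -(1 / (x + 1)) := by field_simp; ring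
  linarith

noncomputable def betaKernel (a b t : ℝ) : ℝ := t ^ (a - 1) * (1 - t) ^ (b - 1)

section Kernel

variable {a b : ℝ}

lemma betaKernel_pos {t : ℝ} (ht0 : 0 < t) (ht1 : t < 1) : 0 < betaKernel a b t := by
  unfold betaKernel
  have : 0 < 1 - t := by linarith
  positivity

lemma intervalIntegrable_betaKernel (ha : 0 < a) (hb : 1 ≤ b) (x y : ℝ) :
    IntervalIntegrable (betaKernel a b) volume x y := by
  have hcont : Continuous fun t : ℝ => (1 - t) ^ (b - 1) :=
    (continuous_const.sub continuous_id).rpow_const fun _ => Or.inr (by linarith)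
  exact (intervalIntegrable_rpow' (by linarith : -1 < a - 1)).mul_continuousOn
    hcont.continuousOn

lemma integral_betaKernel_pos (ha : 0 < a) (hb : 1 ≤ b) {x : ℝ} (hx0 : 0 < x) (hx1 : x ≤ 1) :
    0 < ∫ t in (0:ℝ)..x, betaKernel a b t :=
  intervalIntegral_pos_of_pos_on (intervalIntegrable_betaKernel ha hb 0 x)
    (fun _ ht => betaKernel_pos ht.1 (ht.2.trans_le hx1)) hx0

lemma hasDerivAt_rpow_mul_one_sub_rpow {t : ℝ} (ht0 : 0 < t) (ht1 : t < 1) :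
    HasDerivAt (fun t => t ^ a * (1 - t) ^ b)
      ((a + b) * betaKernel a (b + 1) t - b * betaKernel a b t) t := by
  have h1t : 0 < 1 - t := by linarith
  have hd := (hasDerivAt_rpow_const (p := a) (Or.inl ht0.ne')).mul
    (((hasDerivAt_id t).const_sub 1).rpow_const (p := b) (Or.inl h1t.ne'))
  refine hd.congr_deriv ?_
  simp only [betaKernel, add_sub_cancel_right, id]
  rw [rpow_sub_one ht0.ne', rpow_sub_one h1t.ne']
  field_simp
  ring

lemma integral_betaKernel_add_one_right (ha : 0 < a) (hb : 1 ≤ b) {x : ℝ} (hx0 : 0 ≤ x)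
    (hx1 : x ≤ 1) :
    (a + b) * ∫ t in (0:ℝ)..x, betaKernel a (b + 1) t
      = b * (∫ t in (0:ℝ)..x, betaKernel a b t) + x ^ a * (1 - x) ^ b := by
  have hint := intervalIntegrable_betaKernel ha hb 0 x
  have hint' := intervalIntegrable_betaKernel ha (by linarith : 1 ≤ b + 1) 0 x
  have hcont : ContinuousOn (fun t : ℝ => t ^ a * (1 - t) ^ b) (Icc 0 x) := by
    refine (Continuous.mul ?_ ?_).continuousOn
    · exact continuous_id.rpow_const fun _ => Or.inr ha.le
    · exact (continuous_const.sub continuous_id).rpow_const fun _ => Or.inr (by linarith)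
  have hftc := integral_eq_sub_of_hasDerivAt_of_le hx0 hcont
    (fun t ht => hasDerivAt_rpow_mul_one_sub_rpow ht.1 (ht.2.trans_le hx1))
    ((hint'.const_mul (a + b)).sub (hint.const_mul b))
  rw [integral_sub (hint'.const_mul _) (hint.const_mul _), intervalIntegral.integral_const_mul,
    intervalIntegral.integral_const_mul, zero_rpow ha.ne', zero_mul, sub_zero] at hftc
  linarith

lemma betaFun_eq_integral (a b : ℝ) : betaFun a b = ∫ t in (0:ℝ)..1, betaKernel a b t := rfl

lemma regIncBeta_eq_div (x a b : ℝ) :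
    regIncBeta x a b = (∫ t in (0:ℝ)..x, betaKernel a b t) / betaFun a b := rfl

lemma betaFun_pos (ha : 0 < a) (hb : 1 ≤ b) : 0 < betaFun a b :=
  integral_betaKernel_pos ha hb one_pos le_rfl

lemma betaFun_add_one_right (ha : 0 < a) (hb : 1 ≤ b) :
    (a + b) * betaFun a (b + 1) = b * betaFun a b := by
  simpa [betaFun_eq_integral, zero_rpow (by linarith : b ≠ 0)] using
    integral_betaKernel_add_one_right ha hb zero_le_one le_rfl

lemma regIncBeta_add_one_right (ha : 0 < a) (hb : 1 ≤ b) {x : ℝ} (hx0 : 0 ≤ x) (hx1 : x ≤ 1) :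
    regIncBeta x a (b + 1) = regIncBeta x a b + x ^ a * (1 - x) ^ b / (b * betaFun a b) := by
  have hab : a + b ≠ 0 := by linarith
  have hB := (betaFun_pos ha hb).ne'
  rw [regIncBeta_eq_div, regIncBeta_eq_div, ← mul_div_mul_left _ _ hab,
    betaFun_add_one_right ha hb, integral_betaKernel_add_one_right ha hb hx0 hx1]
  field_simp

lemma regIncBeta_sub_regIncBeta (ha : 0 < a) (hb : 1 ≤ b) (x y : ℝ) :
    regIncBeta y a b - regIncBeta x a b = (∫ t in x..y, betaKernel a b t) / betaFun a b := by
  rw [regIncBeta_eq_div, regIncBeta_eq_div, ← sub_div, integral_interval_sub_left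
    (intervalIntegrable_betaKernel ha hb 0 y) (intervalIntegrable_betaKernel ha hb 0 x)]

lemma antitoneOn_betaKernel (ha : a ≤ 1) (hb : 1 ≤ b) : AntitoneOn (betaKernel a b) (Ioo 0 1) :=
  fun x hx y hy hxy => mul_le_mul (rpow_le_rpow_of_nonpos hx.1 hxy (by linarith))
    (rpow_le_rpow (by linarith [hy.2]) (by linarith) (by linarith))
    (rpow_nonneg (by linarith [hy.2]) _) (rpow_nonneg hx.1.le _)

lemma concaveOn_log_betaKernel (ha : 1 ≤ a) (hb : 1 ≤ b) :
    ConcaveOn ℝ (Ioo 0 1) fun t => (a - 1) * log t + (b - 1) * log (1 - t) := by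
  have hlog := strictConcaveOn_log_Ioi.concaveOn
  have hlog' : ConcaveOn ℝ (Ioo 0 1) fun t : ℝ => log (1 - t) :=
    ((hlog.comp_affineMap (AffineMap.lineMap 1 0)).subset
      (fun t ht => by simpa [AffineMap.lineMap_apply_ring] using ht.2) (convex_Ioo 0 1)).congr
      fun t _ => by simp [AffineMap.lineMap_apply_ring]
  exact ((hlog.subset Ioo_subset_Ioi_self (convex_Ioo 0 1)).smul (by linarith)).add
    (hlog'.smul (by linarith))

lemma quasiconcaveOn_betaKernel (hb : 1 ≤ b) : QuasiconcaveOn ℝ (Ioo 0 1) (betaKernel a b) := by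
  rcases le_total a 1 with ha | ha
  · exact (antitoneOn_betaKernel ha hb).quasiconcaveOn (convex_Ioo 0 1)
  · refine ((concaveOn_log_betaKernel ha hb).quasiconcaveOn.monotone_comp exp_monotone).congr ?_
    intro t ht
    simp only [Function.comp_apply, betaKernel, exp_add]
    rw [rpow_def_of_pos ht.1, rpow_def_of_pos (by linarith [ht.2]), mul_comm (log t),
      mul_comm (log (1 - t))]

lemma continuousOn_betaKernel {x y : ℝ} (hx : 0 < x) (hy : y < 1) :
    ContinuousOn (betaKernel a b) (Icc x y) :=
  (continuousOn_id.rpow_const fun _ ht => Or.inl (hx.trans_le ht.1).ne').mul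
    ((continuousOn_const.sub continuousOn_id).rpow_const fun _ ht =>
      Or.inl (sub_pos.2 (ht.2.trans_lt hy)).ne')

lemma mul_min_le_integral_betaKernel (hb : 1 ≤ b) {x y : ℝ} (hx : 0 < x) (hxy : x ≤ y)
    (hy : y < 1) :
    (y - x) * min (betaKernel a b x) (betaKernel a b y) ≤ ∫ t in x..y, betaKernel a b t := by
  have hIoo {t : ℝ} (ht : t ∈ Icc x y) : t ∈ Ioo (0 : ℝ) 1 :=
    ⟨hx.trans_le ht.1, ht.2.trans_lt hy⟩
  calc (y - x) * min (betaKernel a b x) (betaKernel a b y)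
      = ∫ _ in x..y, min (betaKernel a b x) (betaKernel a b y) := by simp
    _ ≤ ∫ t in x..y, betaKernel a b t :=
      integral_mono_on hxy intervalIntegrable_const
        ((continuousOn_betaKernel hx hy).intervalIntegrable_of_Icc hxy) fun t ht =>
          (quasiconcaveOn_betaKernel hb).min_le_of_mem_Icc (hIoo (left_mem_Icc.2 hxy))
            (hIoo (right_mem_Icc.2 hxy)) ht

lemma rpow_mul_one_sub_rpow_eq_mul_betaKernel {x : ℝ} (hx0 : 0 < x) (hx1 : x < 1) :
    x ^ a * (1 - x) ^ b = x * (1 - x) * betaKernel a b x := by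
  have h1x : 0 < 1 - x := sub_pos.2 hx1
  rw [betaKernel, rpow_sub_one hx0.ne', rpow_sub_one h1x.ne']
  field_simp

lemma betaKernel_div_add_pos {s c : ℝ} (hs : 0 < s) (hc : 0 < c) :
    0 < betaKernel a b (s / (s + c)) :=
  betaKernel_pos (by positivity) ((div_lt_one (by positivity)).2 (by linarith))

lemma log_betaKernel_div_add {s c : ℝ} (hs : 0 < s) (hc : 0 < c) :
    log (betaKernel a b (s / (s + c)))
      = (a - 1) * log s + (b - 1) * log c - (a + b - 2) * log (s + c) := by
  have hsc : 0 < s + c := by linarith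
  have h1 : 1 - s / (s + c) = c / (s + c) := by field_simp; ring
  rw [betaKernel, h1, log_mul (by positivity) (by positivity), log_rpow (by positivity),
    log_rpow (by positivity), log_div hs.ne' hsc.ne', log_div hc.ne' hsc.ne']
  ring

lemma betaKernel_div_add_div_lt {s : ℝ} (hb : 1 < b) (hs : 0 < s) (hsa : s ≤ a) :
    betaKernel a b (s / (s + b)) / (s + b)
      < betaKernel a b (s / (s + b - 1)) / (s + b - 1) := by
  have hsb : s + b - 1 = s + (b - 1) := by ring
  have hφ := strictMonoOn_mul_log_add_one_sub_log (mem_Ioi.2 (by linarith : 0 < b - 1))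
    (mem_Ioi.2 (by linarith : 0 < s + b - 1)) (by linarith)
  simp only [sub_add_cancel] at hφ
  have hgap : 0 ≤ log (s + b) - log (s + b - 1) :=
    sub_nonneg.2 (log_le_log (by linarith) (by linarith))
  have key : (b - 1) * (log b - log (b - 1)) < (a + b - 1) * (log (s + b) - log (s + b - 1)) :=
    hφ.trans_le (mul_le_mul_of_nonneg_right (by linarith) hgap)
  have hb0 : 0 < b := by linarith
  have hb1 : 0 < b - 1 := by linarith
  rw [hsb, ← log_lt_log_iff (div_pos (betaKernel_div_add_pos hs hb0) (by positivity))
    (div_pos (betaKernel_div_add_pos hs hb1) (by positivity)),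
    log_div (betaKernel_div_add_pos hs hb0).ne' (by positivity),
    log_div (betaKernel_div_add_pos hs hb1).ne' (by positivity),
    log_betaKernel_div_add hs hb0, log_betaKernel_div_add hs hb1, ← hsb]
  linarith

lemma rpow_mul_one_sub_rpow_div_lt_mul_min_betaKernel {s : ℝ} (hb : 1 < b) (hs : 0 < s)
    (hsa : s ≤ a) :
    (s / (s + b)) ^ a * (1 - s / (s + b)) ^ b / b
      < (s / (s + b - 1) - s / (s + b))
        * min (betaKernel a b (s / (s + b))) (betaKernel a b (s / (s + b - 1))) := by
  have hb0 : 0 < b := by linarith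
  have hsb1 : 0 < s + b - 1 := by linarith
  have hfq' := betaKernel_div_add_pos (a := a) (b := b) hs hb0
  have hq'1 : s / (s + b) < 1 := (div_lt_one (by positivity)).2 (by linarith)
  have h1q' : 1 - s / (s + b) = b / (s + b) := by field_simp; ring
  calc (s / (s + b)) ^ a * (1 - s / (s + b)) ^ b / b
      = s / (s + b) * (betaKernel a b (s / (s + b)) / (s + b)) := by
        rw [rpow_mul_one_sub_rpow_eq_mul_betaKernel (by positivity) hq'1, h1q']
        field_simp
    _ < s / (s + b) * min (betaKernel a b (s / (s + b)) / (s + b - 1))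
          (betaKernel a b (s / (s + b - 1)) / (s + b - 1)) :=
        mul_lt_mul_of_pos_left (lt_min (div_lt_div_of_pos_left hfq' hsb1 (by linarith))
          (betaKernel_div_add_div_lt hb hs hsa)) (by positivity)
    _ = _ := by
        rw [min_div_div_right hsb1.le]
        field_simp
        ring

end Kernel

/-- For `0 < κ ≤ 1`, `a ≥ 1/2`, `b > 1`:
`I_{q(a,b+1,κ)}(a, b+1) < I_{q(a,b,κ)}(a, b)`. -/
theorem regIncBeta_q_strict_decreasing (κ a b : ℝ) (hκ0 : 0 < κ) (hκ1 : κ ≤ 1)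
    (ha : 1 / 2 ≤ a) (hb : 1 < b) :
    regIncBeta (qF a (b + 1) κ) a (b + 1) < regIncBeta (qF a b κ) a b := by
  have ha0 : 0 < a := by linarith
  have hs : 0 < κ * a := mul_pos hκ0 ha0
  have hsa : κ * a ≤ a := mul_le_of_le_one_left ha0.le hκ1
  have hq' : qF a (b + 1) κ = κ * a / (κ * a + b) := by
    rw [qF, add_sub_assoc, add_sub_cancel_right]
  have hq : qF a b κ = κ * a / (κ * a + b - 1) := rfl
  have hq'0 : 0 < κ * a / (κ * a + b) := by positivity
  have hq'q : κ * a / (κ * a + b) ≤ κ * a / (κ * a + b - 1) :=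
    div_le_div_of_nonneg_left hs.le (by linarith) (by linarith)
  have hq1 : κ * a / (κ * a + b - 1) < 1 := (div_lt_one (by linarith)).2 (by linarith)
  rw [hq', hq, regIncBeta_add_one_right ha0 hb.le hq'0.le (hq'q.trans hq1.le),
    ← lt_sub_iff_add_lt', regIncBeta_sub_regIncBeta ha0 hb.le, ← div_div,
    div_lt_div_iff_of_pos_right (betaFun_pos ha0 hb.le)]
  exact (rpow_mul_one_sub_rpow_div_lt_mul_min_betaKernel hb hs hsa).trans_le
    (mul_min_le_integral_betaKernel hb.le hq'0 hq'q hq1)
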